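/- arXiv:2405.11987 — 3 statements merged into one kernel-verified Lean document; each statement's English description precedes it below -/
import Mathlib

section
/- Distributivity of indistinguishability over extension: if store s extends to a store r (i.e., s ⊑ r, meaning s is the projection of r) and r ≈ t (indistinguishable), then there exists a store u with s ≈ u and u ⊑ t; concretely, u may be taken to be the projection of t onto the domain of s, provided the distinguisher class is closed under precomposition with restriction. -/
def Negligible (ν : ℕ → ℝ) : Prop :=
  ∀ k : ℕ, ∃ N : ℕ, ∀ n ≥ N, ν n ≤ 1 / (n : ℝ) ^ k

/-- A store: a finite index set together with an ensemble of distributions on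
the corresponding function space. -/
structure Store (ι V : Type) where
  dom : Finset ι
  dist : ℕ → PMF (↥dom → V)

/-- `s ⊑ r`: `s` is the projection of `r` onto `dom s`. -/
def StoreExt {ι V : Type} (s r : Store ι V) : Prop :=
  ∃ h : s.dom ⊆ r.dom,
    ∀ n, (r.dist n).map (fun m (x : ↥s.dom) => m ⟨x.1, h x.2⟩) = s.dist n

/-- Indistinguishability of stores on the same domain: every distinguisher in
the class `𝔄` has negligible advantage. -/
def StoreIndist {ι V : Type} (𝔄 : ∀ Δ : Finset ι, Set (ℕ → (↥Δ → V) → PMF Bool))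
    (s r : Store ι V) : Prop :=
  ∃ h : s.dom = r.dom, ∀ A ∈ 𝔄 s.dom,
    Negligible fun n =>
      |(((s.dist n).bind (A n)) true).toReal -
        ((((r.dist n).map fun m (x : ↥s.dom) => m ⟨x.1, h ▸ x.2⟩).bind (A n)) true).toReal|

/-- Distributivity of indistinguishability over extension: if `s ⊑ r ≈ t` then
there is `u` with `s ≈ u ⊑ t`, provided the distinguisher class is closed under
precomposition with restriction. -/
theorem indist_ext_distrib {ι V : Type}
    (𝔄 : ∀ Δ : Finset ι, Set (ℕ → (↥Δ → V) → PMF Bool))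
    (hrestr : ∀ (Δ Ξ : Finset ι) (h : Δ ⊆ Ξ), ∀ A ∈ 𝔄 Δ,
      (fun n (m : ↥Ξ → V) => A n fun x => m ⟨x.1, h x.2⟩) ∈ 𝔄 Ξ)
    (s r t : Store ι V) (hsr : StoreExt s r) (hrt : StoreIndist 𝔄 r t) :
    ∃ u : Store ι V, StoreIndist 𝔄 s u ∧ StoreExt u t := by
  obtain ⟨hsub, hproj⟩ := hsr
  obtain ⟨hdom, hadv⟩ := hrt
  have hsub' : s.dom ⊆ t.dom := hdom ▸ hsub
  refine ⟨⟨s.dom, fun n => (t.dist n).map (fun m x => m ⟨x.1, hsub' x.2⟩)⟩,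
    ⟨rfl, ?_⟩, ⟨hsub', fun n => ?_⟩⟩
  · intro A hA
    have hA' := hrestr s.dom r.dom hsub A hA
    have hneg := hadv _ hA'
    convert hneg using 4 with n
    · rw [← hproj n, PMF.bind_map]
      rfl
    · rw [PMF.bind_map, PMF.bind_map, PMF.bind_map]
      rfl
  · rfl
end

section
/- Stores with tensor product, the empty store, and the composite relation (indistinguishability followed by extension) form a partial Kripke resource monoid: the tensor product is associative and has the empty store as two-sided unit, and the preorder ≈⊑ is compatible with tensor product on both sides. -/
/-- Merging of two memories on disjoint union of domains. -/
def mergeFun {ι V : Type} [DecidableEq ι] (Δ Ξ : Finset ι)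
    (a : ↥Δ → V) (b : ↥Ξ → V) : ↥(Δ ∪ Ξ) → V := fun x =>
  if hx : x.1 ∈ Δ then a ⟨x.1, hx⟩
  else b ⟨x.1, (Finset.mem_union.mp x.2).resolve_left hx⟩

/-- Tensor product of stores, defined (only) when the domains are disjoint:
the independent product on the union of the domains. -/
noncomputable def Store.tensor {ι V : Type} [DecidableEq ι] (s r : Store ι V)
    (_ : Disjoint s.dom r.dom) : Store ι V where
  dom := s.dom ∪ r.dom
  dist := fun n => (s.dist n).bind fun a => (r.dist n).map fun b =>
    mergeFun s.dom r.dom a b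

/-- The empty store: empty domain, Dirac distribution on the empty memory. -/
noncomputable def Store.empty (ι V : Type) : Store ι V where
  dom := ∅
  dist := fun _ => PMF.pure fun x => absurd x.2 (Finset.notMem_empty x.1)

/-- The composite relation: indistinguishability followed by extension. -/
def IndExt {ι V : Type} (𝔄 : ∀ Δ : Finset ι, Set (ℕ → (↥Δ → V) → PMF Bool))
    (s r : Store ι V) : Prop :=
  ∃ u : Store ι V, StoreIndist 𝔄 s u ∧ StoreExt u r

section Negligible

theorem Negligible.mono {f g : ℕ → ℝ} (hg : Negligible g) (h : ∀ n, f n ≤ g n) :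
    Negligible f := fun k => by
  obtain ⟨N, hN⟩ := hg k
  exact ⟨N, fun n hn => (h n).trans (hN n hn)⟩

theorem negligible_zero : Negligible fun _ => 0 := fun k =>
  ⟨0, fun n _ => by positivity⟩

theorem Negligible.add {f g : ℕ → ℝ} (hf : Negligible f) (hg : Negligible g) :
    Negligible fun n => f n + g n := by
  intro k
  obtain ⟨N₁, h₁⟩ := hf (k + 1)
  obtain ⟨N₂, h₂⟩ := hg (k + 1)
  refine ⟨max (max N₁ N₂) 2, fun n hn => ?_⟩
  simp only [ge_iff_le, max_le_iff] at hn
  have hn2 : (2 : ℝ) ≤ n := by exact_mod_cast hn.2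
  have hpos : (0 : ℝ) < (n : ℝ) ^ k := by positivity
  calc f n + g n ≤ 2 / (n : ℝ) ^ (k + 1) := by
        have := add_le_add (h₁ n hn.1.1) (h₂ n hn.1.2)
        rwa [← add_div, one_add_one_eq_two] at this
    _ ≤ 1 / (n : ℝ) ^ k := by
        rw [div_le_div_iff₀ (by positivity) hpos, pow_succ]
        nlinarith

end Negligible

section Advantage

variable {α β : Type*}

noncomputable def advantage (p q : PMF α) (A : α → PMF Bool) : ℝ :=
  |((p.bind A) true).toReal - ((q.bind A) true).toReal|

@[simp]
theorem advantage_self (p : PMF α) (A : α → PMF Bool) : advantage p p A = 0 := by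
  simp [advantage]

theorem advantage_triangle (p q r : PMF α) (A : α → PMF Bool) :
    advantage p r A ≤ advantage p q A + advantage q r A :=
  abs_sub_le _ _ _

theorem advantage_map (p q : PMF α) (φ : α → β) (A : β → PMF Bool) :
    advantage (p.map φ) (q.map φ) A = advantage p q (A ∘ φ) := by
  simp only [advantage, PMF.bind_map]

theorem advantage_bind (p q : PMF α) (K : α → PMF β) (A : β → PMF Bool) :
    advantage (p.bind K) (q.bind K) A = advantage p q fun a => (K a).bind A := by
  simp only [advantage, PMF.bind_bind]

end Advantage

section

variable {ι V : Type}

def restrictMem {Δ Ξ : Finset ι} (h : Δ ⊆ Ξ) (m : ↥Ξ → V) : ↥Δ → V :=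
  fun x => m ⟨x.1, h x.2⟩

section Extension

theorem StoreExt.refl (s : Store ι V) : StoreExt s s :=
  ⟨subset_rfl, fun _ => PMF.map_id _⟩

theorem StoreExt.trans {s u w : Store ι V} (h₁ : StoreExt s u) (h₂ : StoreExt u w) :
    StoreExt s w := by
  obtain ⟨hsu, hu⟩ := h₁
  obtain ⟨huw, hw⟩ := h₂
  refine ⟨hsu.trans huw, fun n => ?_⟩
  rw [← hu n, ← hw n, PMF.map_comp]
  rfl

theorem StoreExt.eq_of_dom_subset {s r : Store ι V} (h : StoreExt s r) (hd : r.dom ⊆ s.dom) :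
    s = r := by
  obtain ⟨D, f⟩ := s
  obtain ⟨E, g⟩ := r
  obtain ⟨hsub, hmap⟩ := h
  obtain rfl : D = E := Finset.Subset.antisymm hsub hd
  congr 1
  funext n
  exact (hmap n).symm.trans (PMF.map_id _)

end Extension

section Indistinguishability

variable {𝔄 : ∀ Δ : Finset ι, Set (ℕ → (↥Δ → V) → PMF Bool)}

theorem storeIndist_mk_iff {D : Finset ι} (f g : ℕ → PMF (↥D → V)) :
    StoreIndist 𝔄 ⟨D, f⟩ ⟨D, g⟩ ↔
      ∀ A ∈ 𝔄 D, Negligible fun n => advantage (f n) (g n) (A n) := by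
  have hid : ∀ n, (g n).map (fun m (x : ↥D) => m ⟨x.1, x.2⟩) = g n := fun n => PMF.map_id _
  exact ⟨fun ⟨_, H⟩ A hA => by simpa only [advantage, hid] using H A hA,
    fun H => ⟨rfl, fun A hA => by simpa only [advantage, hid] using H A hA⟩⟩

theorem StoreIndist.dom_eq {s r : Store ι V} (h : StoreIndist 𝔄 s r) : s.dom = r.dom :=
  h.1

theorem StoreIndist.refl (s : Store ι V) : StoreIndist 𝔄 s s := by
  obtain ⟨D, f⟩ := s
  rw [storeIndist_mk_iff]
  intro A _
  simpa only [advantage_self] using negligible_zero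

theorem StoreIndist.trans {s u w : Store ι V} (h₁ : StoreIndist 𝔄 s u)
    (h₂ : StoreIndist 𝔄 u w) : StoreIndist 𝔄 s w := by
  obtain ⟨D, f⟩ := s
  obtain ⟨E, g⟩ := u
  obtain ⟨F, k⟩ := w
  obtain rfl : D = E := h₁.dom_eq
  obtain rfl : D = F := h₂.dom_eq
  rw [storeIndist_mk_iff] at h₁ h₂ ⊢
  exact fun A hA => ((h₁ A hA).add (h₂ A hA)).mono fun n => advantage_triangle _ _ _ _

theorem exists_storeIndist_storeExt_of_storeExt_storeIndist
    (hrestr : ∀ (Δ Ξ : Finset ι) (h : Δ ⊆ Ξ), ∀ A ∈ 𝔄 Δ,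
      (fun n m => A n (restrictMem h m)) ∈ 𝔄 Ξ)
    {u r v : Store ι V} (hur : StoreExt u r) (hrv : StoreIndist 𝔄 r v) :
    ∃ w, StoreIndist 𝔄 u w ∧ StoreExt w v := by
  obtain ⟨C, f⟩ := u
  obtain ⟨E, g⟩ := r
  obtain ⟨F, k⟩ := v
  obtain rfl : E = F := hrv.dom_eq
  obtain ⟨hCE, hf⟩ := hur
  replace hf : ∀ n, (g n).map (restrictMem hCE) = f n := hf
  refine ⟨⟨C, fun n => (k n).map (restrictMem hCE)⟩, ?_, hCE, fun _ => rfl⟩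
  rw [storeIndist_mk_iff] at hrv ⊢
  intro A hA
  simp only [← hf, advantage_map]
  exact hrv _ (hrestr C E hCE A hA)

theorem IndExt.refl (s : Store ι V) : IndExt 𝔄 s s :=
  ⟨s, .refl s, .refl s⟩

theorem IndExt.trans
    (hrestr : ∀ (Δ Ξ : Finset ι) (h : Δ ⊆ Ξ), ∀ A ∈ 𝔄 Δ,
      (fun n m => A n (restrictMem h m)) ∈ 𝔄 Ξ)
    {s r t : Store ι V} : IndExt 𝔄 s r → IndExt 𝔄 r t → IndExt 𝔄 s t := by
  rintro ⟨u, hsu, hur⟩ ⟨v, hrv, hvt⟩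
  obtain ⟨w, huw, hwv⟩ := exists_storeIndist_storeExt_of_storeExt_storeIndist hrestr hur hrv
  exact ⟨w, hsu.trans huw, hwv.trans hvt⟩

end Indistinguishability

variable [DecidableEq ι]

section Merge

theorem restrictMem_mergeFun_left (Δ Ξ : Finset ι) (a : ↥Δ → V) (b : ↥Ξ → V) :
    restrictMem Finset.subset_union_left (mergeFun Δ Ξ a b) = a :=
  funext fun x => dif_pos x.2

theorem restrictMem_mergeFun_right {Δ Ξ : Finset ι} (h : Disjoint Δ Ξ) (a : ↥Δ → V)
    (b : ↥Ξ → V) : restrictMem Finset.subset_union_right (mergeFun Δ Ξ a b) = b :=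
  funext fun x => dif_neg (Finset.disjoint_right.mp h x.2)

theorem restrictMem_mergeFun {Δ Δ' Ξ Ξ' : Finset ι} (hΔ : Δ' ⊆ Δ) (hΞ : Ξ' ⊆ Ξ)
    (h : Disjoint Δ Ξ') (a : ↥Δ → V) (b : ↥Ξ → V) :
    restrictMem (Finset.union_subset_union hΔ hΞ) (mergeFun Δ Ξ a b) =
      mergeFun Δ' Ξ' (restrictMem hΔ a) (restrictMem hΞ b) := by
  funext x
  by_cases hx : x.1 ∈ Δ'
  · simp [restrictMem, mergeFun, hx, hΔ hx]
  · have hxΞ : x.1 ∈ Ξ' := (Finset.mem_union.mp x.2).resolve_left hx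
    simp [restrictMem, mergeFun, hx, Finset.disjoint_right.mp h hxΞ]

theorem restrictMem_mergeFun_assoc (D E F : Finset ι) (a : ↥D → V) (b : ↥E → V)
    (c : ↥F → V) :
    restrictMem (Finset.union_assoc D E F).subset (mergeFun D (E ∪ F) a (mergeFun E F b c)) =
      mergeFun (D ∪ E) F (mergeFun D E a b) c := by
  funext x
  simp only [restrictMem, mergeFun, Finset.mem_union]
  split_ifs <;> first | rfl | (exfalso; tauto)

end Merge

namespace Store

theorem storeExt_tensor_left (s r : Store ι V) (h : Disjoint s.dom r.dom) :
    StoreExt s (s.tensor r h) := by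
  refine ⟨Finset.subset_union_left, fun n => ?_⟩
  change ((s.dist n).bind fun a => (r.dist n).map (mergeFun s.dom r.dom a)).map
    (restrictMem Finset.subset_union_left) = s.dist n
  simp only [PMF.map_bind, PMF.map_comp, Function.comp_def, restrictMem_mergeFun_left]
  exact (congrArg _ (funext fun _ => PMF.map_const _ _)).trans (PMF.bind_pure _)

theorem storeExt_tensor_right (s r : Store ι V) (h : Disjoint s.dom r.dom) :
    StoreExt r (s.tensor r h) := by
  refine ⟨Finset.subset_union_right, fun n => ?_⟩
  change ((s.dist n).bind fun a => (r.dist n).map (mergeFun s.dom r.dom a)).map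
    (restrictMem Finset.subset_union_right) = r.dist n
  simp only [PMF.map_bind, PMF.map_comp, Function.comp_def, restrictMem_mergeFun_right h]
  exact PMF.bind_const _ _ |>.trans (PMF.map_id _)

theorem empty_tensor (s : Store ι V) (h : Disjoint (Store.empty ι V).dom s.dom) :
    (Store.empty ι V).tensor s h = s :=
  ((storeExt_tensor_right _ s h).eq_of_dom_subset (Finset.empty_union s.dom).subset).symm

theorem tensor_empty (s : Store ι V) (h : Disjoint s.dom (Store.empty ι V).dom) :
    s.tensor (Store.empty ι V) h = s :=
  ((storeExt_tensor_left s _ h).eq_of_dom_subset (Finset.union_empty s.dom).subset).symm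

theorem tensor_assoc (s r t : Store ι V) (h₁ : Disjoint s.dom r.dom)
    (h₂ : Disjoint s.dom t.dom) (h₃ : Disjoint r.dom t.dom) :
    (s.tensor r h₁).tensor t (Finset.disjoint_union_left.mpr ⟨h₂, h₃⟩) =
      s.tensor (r.tensor t h₃) (Finset.disjoint_union_right.mpr ⟨h₁, h₂⟩) := by
  refine StoreExt.eq_of_dom_subset ⟨(Finset.union_assoc _ _ _).subset, fun n => ?_⟩
    (Finset.union_assoc _ _ _).symm.subset
  change ((s.dist n).bind fun a => ((r.dist n).bind fun b =>
      (t.dist n).map (mergeFun r.dom t.dom b)).map (mergeFun s.dom (r.dom ∪ t.dom) a)).map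
        (restrictMem (Finset.union_assoc _ _ _).subset) =
    ((s.dist n).bind fun a => (r.dist n).map (mergeFun s.dom r.dom a)).bind fun ab =>
      (t.dist n).map (mergeFun (s.dom ∪ r.dom) t.dom ab)
  simp only [PMF.map_bind, PMF.bind_bind, PMF.bind_map, PMF.map_comp, Function.comp_def,
    restrictMem_mergeFun_assoc]

end Store

theorem StoreExt.tensor {s s' r r' : Store ι V} (hs : StoreExt s s') (hr : StoreExt r r')
    (h : Disjoint s.dom r.dom) (h' : Disjoint s'.dom r'.dom) (hdisj : Disjoint s'.dom r.dom) :
    StoreExt (s.tensor r h) (s'.tensor r' h') := by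
  obtain ⟨hss', hsn⟩ := hs
  obtain ⟨hrr', hrn⟩ := hr
  refine ⟨Finset.union_subset_union hss' hrr', fun n => ?_⟩
  change ((s'.dist n).bind fun a => (r'.dist n).map (mergeFun s'.dom r'.dom a)).map
      (restrictMem (Finset.union_subset_union hss' hrr')) =
    (s.dist n).bind fun a => (r.dist n).map (mergeFun s.dom r.dom a)
  rw [← hsn n, ← hrn n]
  simp only [PMF.map_bind, PMF.bind_map, PMF.map_comp, Function.comp_def,
    restrictMem_mergeFun hss' hrr' hdisj]
  rfl

section Compatibility

variable {𝔄 : ∀ Δ : Finset ι, Set (ℕ → (↥Δ → V) → PMF Bool)}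

theorem StoreIndist.tensor_right
    (hsampR : ∀ (Δ : Finset ι) (t : Store ι V), ∀ A ∈ 𝔄 (Δ ∪ t.dom),
      (fun n (a : ↥Δ → V) => (t.dist n).bind fun b => A n (mergeFun Δ t.dom a b)) ∈ 𝔄 Δ)
    {s u : Store ι V} (t : Store ι V) (hs : Disjoint s.dom t.dom) (hu : Disjoint u.dom t.dom)
    (h : StoreIndist 𝔄 s u) : StoreIndist 𝔄 (s.tensor t hs) (u.tensor t hu) := by
  obtain ⟨D, f⟩ := s
  obtain ⟨E, g⟩ := u
  obtain rfl : D = E := h.dom_eq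
  rw [storeIndist_mk_iff] at h
  refine (storeIndist_mk_iff _ _).mpr fun A hA => ?_
  simp only [advantage_bind, PMF.bind_map]
  exact h _ (hsampR D t A hA)

theorem StoreIndist.tensor_left
    (hsampL : ∀ (Ξ : Finset ι) (t : Store ι V), ∀ A ∈ 𝔄 (t.dom ∪ Ξ),
      (fun n (b : ↥Ξ → V) => (t.dist n).bind fun a => A n (mergeFun t.dom Ξ a b)) ∈ 𝔄 Ξ)
    {s u : Store ι V} (t : Store ι V) (hs : Disjoint t.dom s.dom) (hu : Disjoint t.dom u.dom)
    (h : StoreIndist 𝔄 s u) : StoreIndist 𝔄 (t.tensor s hs) (t.tensor u hu) := by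
  obtain ⟨D, f⟩ := s
  obtain ⟨E, g⟩ := u
  obtain rfl : D = E := h.dom_eq
  rw [storeIndist_mk_iff] at h
  refine (storeIndist_mk_iff _ _).mpr fun A hA => ?_
  have sample_t_last : ∀ (n : ℕ) (p : PMF (↥D → V)),
      ((t.dist n).bind fun a => p.map (mergeFun t.dom D a)) =
        p.bind fun b => (t.dist n).map fun a => mergeFun t.dom D a b :=
    fun n p => PMF.bind_comm _ _ _
  simp only [sample_t_last, advantage_bind, PMF.bind_map]
  exact h _ (hsampL D t A hA)

theorem IndExt.tensor_right
    (hsampR : ∀ (Δ : Finset ι) (t : Store ι V), ∀ A ∈ 𝔄 (Δ ∪ t.dom),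
      (fun n (a : ↥Δ → V) => (t.dist n).bind fun b => A n (mergeFun Δ t.dom a b)) ∈ 𝔄 Δ)
    {s r : Store ι V} (t : Store ι V) (hs : Disjoint s.dom t.dom) (hr : Disjoint r.dom t.dom) :
    IndExt 𝔄 s r → IndExt 𝔄 (s.tensor t hs) (r.tensor t hr) := by
  rintro ⟨u, hsu, hur⟩
  have hu : Disjoint u.dom t.dom := hsu.dom_eq ▸ hs
  exact ⟨u.tensor t hu, hsu.tensor_right hsampR t hs hu, hur.tensor (.refl t) hu hr hr⟩

theorem IndExt.tensor_left
    (hsampL : ∀ (Ξ : Finset ι) (t : Store ι V), ∀ A ∈ 𝔄 (t.dom ∪ Ξ),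
      (fun n (b : ↥Ξ → V) => (t.dist n).bind fun a => A n (mergeFun t.dom Ξ a b)) ∈ 𝔄 Ξ)
    {s r : Store ι V} (t : Store ι V) (hs : Disjoint t.dom s.dom) (hr : Disjoint t.dom r.dom) :
    IndExt 𝔄 s r → IndExt 𝔄 (t.tensor s hs) (t.tensor r hr) := by
  rintro ⟨u, hsu, hur⟩
  have hu : Disjoint t.dom u.dom := hsu.dom_eq ▸ hs
  exact ⟨t.tensor u hu, hsu.tensor_left hsampL t hs hu, (StoreExt.refl t).tensor hur hu hr hu⟩

end Compatibility

end

/-- Stores with tensor product, the empty store, and the relation `≈⊑` form a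
partial Kripke resource monoid: the tensor product is associative with the
empty store as two-sided unit, `≈⊑` is a preorder, and it is compatible with
tensor product on both sides.  The distinguisher class is assumed closed under
precomposition with restriction and with sampling of an independent component. -/
theorem store_partial_kripke_resource_monoid {ι V : Type} [DecidableEq ι]
    (𝔄 : ∀ Δ : Finset ι, Set (ℕ → (↥Δ → V) → PMF Bool))
    (hrestr : ∀ (Δ Ξ : Finset ι) (h : Δ ⊆ Ξ), ∀ A ∈ 𝔄 Δ,
      (fun n (m : ↥Ξ → V) => A n fun x => m ⟨x.1, h x.2⟩) ∈ 𝔄 Ξ)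
    (hsampR : ∀ (Δ : Finset ι) (t : Store ι V), ∀ A ∈ 𝔄 (Δ ∪ t.dom),
      (fun n (a : ↥Δ → V) => (t.dist n).bind fun b => A n (mergeFun Δ t.dom a b)) ∈ 𝔄 Δ)
    (hsampL : ∀ (Ξ : Finset ι) (t : Store ι V), ∀ A ∈ 𝔄 (t.dom ∪ Ξ),
      (fun n (b : ↥Ξ → V) => (t.dist n).bind fun a => A n (mergeFun t.dom Ξ a b)) ∈ 𝔄 Ξ) :
    (∀ (s : Store ι V) (h : Disjoint (Store.empty ι V).dom s.dom),
        (Store.empty ι V).tensor s h = s) ∧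
    (∀ (s : Store ι V) (h : Disjoint s.dom (Store.empty ι V).dom),
        s.tensor (Store.empty ι V) h = s) ∧
    (∀ (s r t : Store ι V) (h1 : Disjoint s.dom r.dom) (h2 : Disjoint s.dom t.dom)
        (h3 : Disjoint r.dom t.dom),
        (s.tensor r h1).tensor t
            (show Disjoint (s.dom ∪ r.dom) t.dom from
              Finset.disjoint_union_left.mpr ⟨h2, h3⟩)
          = s.tensor (r.tensor t h3)
            (show Disjoint s.dom (r.dom ∪ t.dom) from
              Finset.disjoint_union_right.mpr ⟨h1, h2⟩)) ∧
    (∀ s : Store ι V, IndExt 𝔄 s s) ∧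
    (∀ s r t : Store ι V, IndExt 𝔄 s r → IndExt 𝔄 r t → IndExt 𝔄 s t) ∧
    (∀ (s r t : Store ι V) (h1 : Disjoint s.dom t.dom) (h2 : Disjoint r.dom t.dom),
        IndExt 𝔄 s r → IndExt 𝔄 (s.tensor t h1) (r.tensor t h2)) ∧
    (∀ (s r t : Store ι V) (h1 : Disjoint t.dom s.dom) (h2 : Disjoint t.dom r.dom),
        IndExt 𝔄 s r → IndExt 𝔄 (t.tensor s h1) (t.tensor r h2)) := by
  exact ⟨Store.empty_tensor, Store.tensor_empty, Store.tensor_assoc, IndExt.refl,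
    fun _ _ _ => IndExt.trans hrestr, fun _ _ t => IndExt.tensor_right hsampR t,
    fun _ _ t => IndExt.tensor_left hsampL t⟩
end

section
/- Characterization of computational independence via tensor product: jointly distributed efficiently samplable ensembles {Rₙ}, {Qₙ} are computationally independent (i.e., indistinguishable from some pair of statistically independent efficiently samplable ensembles ({R′ₙ},{Q′ₙ})) if and only if the joint ensemble ({Rₙ},{Qₙ}) is indistinguishable from the independent product {Rₙ} ⊗ {Qₙ} of its marginals. (Abstract version: over any class of distinguishers closed under projecting to one coordinate, resampling a coordinate independently, and under transitivity of indistinguishability, the two conditions are equivalent.) -/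
def Indist {X : ℕ → Type} (𝔄 : Set (∀ n, X n → PMF Bool))
    (D E : ∀ n, PMF (X n)) : Prop :=
  ∀ A ∈ 𝔄, Negligible fun n =>
    |(((D n).bind (A n)) true).toReal - (((E n).bind (A n)) true).toReal|

/-- The independent product of the two marginals of a joint ensemble. -/
noncomputable def prodMarg {X Y : ℕ → Type} (J : ∀ n, PMF (X n × Y n)) :
    ∀ n, PMF (X n × Y n) :=
  fun n => ((J n).map Prod.fst).bind fun x => ((J n).map Prod.snd).map fun y => (x, y)

theorem Negligible.mono_s17 {μ ν : ℕ → ℝ} (hν : Negligible ν) (h : ∀ n, μ n ≤ ν n) :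
    Negligible μ := fun k => by
  obtain ⟨N, hN⟩ := hν k
  exact ⟨N, fun n hn => (h n).trans (hN n hn)⟩

theorem Negligible.add_s17 {μ ν : ℕ → ℝ} (hμ : Negligible μ) (hν : Negligible ν) :
    Negligible (μ + ν) := by
  intro k
  obtain ⟨M, hM⟩ := hμ (k + 1)
  obtain ⟨N, hN⟩ := hν (k + 1)
  refine ⟨max (max M N) 2, fun n hn => ?_⟩
  simp only [ge_iff_le, max_le_iff] at hn
  have hn2 : (2 : ℝ) ≤ n := by exact_mod_cast hn.2
  have hpos : (0 : ℝ) < n := by linarith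
  calc μ n + ν n ≤ 1 / (n : ℝ) ^ (k + 1) + 1 / (n : ℝ) ^ (k + 1) :=
        add_le_add (hM n hn.1.1) (hN n hn.1.2)
    _ = 2 / n * (1 / (n : ℝ) ^ k) := by field_simp; ring
    _ ≤ 1 * (1 / (n : ℝ) ^ k) := by gcongr; rwa [div_le_one hpos]
    _ = 1 / (n : ℝ) ^ k := one_mul _

namespace Indist

variable {X : ℕ → Type} {𝔄 : Set (∀ n, X n → PMF Bool)} {D E F : ∀ n, PMF (X n)}

theorem symm (h : Indist 𝔄 D E) : Indist 𝔄 E D := fun A hA => by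
  simpa only [abs_sub_comm] using h A hA

theorem trans (hDE : Indist 𝔄 D E) (hEF : Indist 𝔄 E F) : Indist 𝔄 D F := fun A hA =>
  ((hDE A hA).add_s17 (hEF A hA)).mono_s17 fun _ => abs_sub_le _ _ _

end Indist

namespace PMF

variable {α β γ : Type*}

noncomputable def prod (p : PMF α) (q : PMF β) : PMF (α × β) :=
  p.bind fun a => q.map fun b => (a, b)

theorem prod_bind (p : PMF α) (q : PMF β) (f : α × β → PMF γ) :
    (p.prod q).bind f = p.bind fun a => q.bind fun b => f (a, b) := by
  simp only [prod, bind_bind, bind_map]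
  rfl

theorem prod_bind_swap (p : PMF α) (q : PMF β) (f : α × β → PMF γ) :
    (p.prod q).bind f = q.bind fun b => p.bind fun a => f (a, b) := by
  rw [prod_bind, bind_comm]

theorem map_fst_prod (p : PMF α) (q : PMF β) : (p.prod q).map Prod.fst = p := by
  simp only [prod, map_bind, map_comp]
  exact (congrArg p.bind (funext fun a => q.map_const a)).trans p.bind_pure

theorem map_snd_prod (p : PMF α) (q : PMF β) : (p.prod q).map Prod.snd = q := by
  simp only [prod, map_bind, map_comp]
  exact (congrArg p.bind (funext fun _ => q.map_id)).trans (p.bind_const q)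

end PMF

section Ensembles

variable {X Y : ℕ → Type}

theorem prodMarg_eq_prod (J : ∀ n, PMF (X n × Y n)) :
    prodMarg J = fun n => ((J n).map Prod.fst).prod ((J n).map Prod.snd) := rfl

theorem prodMarg_prodMarg (J : ∀ n, PMF (X n × Y n)) : prodMarg (prodMarg J) = prodMarg J := by
  simp only [prodMarg_eq_prod, PMF.map_fst_prod, PMF.map_snd_prod]

variable {𝔄 : Set (∀ n, X n × Y n → PMF Bool)}
  {𝔄X : Set (∀ n, X n → PMF Bool)} {𝔄Y : Set (∀ n, Y n → PMF Bool)}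

theorem Indist.map_fst (c1 : ∀ A ∈ 𝔄X, (fun n (p : X n × Y n) => A n p.1) ∈ 𝔄)
    {J J' : ∀ n, PMF (X n × Y n)} (h : Indist 𝔄 J J') :
    Indist 𝔄X (fun n => (J n).map Prod.fst) (fun n => (J' n).map Prod.fst) := fun A hA => by
  simpa only [PMF.bind_map, Function.comp_def] using h _ (c1 A hA)

theorem Indist.map_snd (c2 : ∀ A ∈ 𝔄Y, (fun n (p : X n × Y n) => A n p.2) ∈ 𝔄)
    {J J' : ∀ n, PMF (X n × Y n)} (h : Indist 𝔄 J J') :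
    Indist 𝔄Y (fun n => (J n).map Prod.snd) (fun n => (J' n).map Prod.snd) := fun A hA => by
  simpa only [PMF.bind_map, Function.comp_def] using h _ (c2 A hA)

theorem Indist.prod_left (c3 : ∀ A ∈ 𝔄, ∀ T : (∀ n, PMF (Y n)),
      (fun n (x : X n) => (T n).bind fun y => A n (x, y)) ∈ 𝔄X)
    {D E : ∀ n, PMF (X n)} (h : Indist 𝔄X D E) (T : ∀ n, PMF (Y n)) :
    Indist 𝔄 (fun n => (D n).prod (T n)) (fun n => (E n).prod (T n)) := fun A hA => by
  simpa only [PMF.prod_bind] using h _ (c3 A hA T)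

theorem Indist.prod_right (c4 : ∀ A ∈ 𝔄, ∀ S : (∀ n, PMF (X n)),
      (fun n (y : Y n) => (S n).bind fun x => A n (x, y)) ∈ 𝔄Y)
    {D E : ∀ n, PMF (Y n)} (h : Indist 𝔄Y D E) (S : ∀ n, PMF (X n)) :
    Indist 𝔄 (fun n => (S n).prod (D n)) (fun n => (S n).prod (E n)) := fun A hA => by
  simpa only [PMF.prod_bind_swap] using h _ (c4 A hA S)

end Ensembles

/-- Characterization of computational independence: a joint ensemble is
indistinguishable from some statistically independent pair iff it is
indistinguishable from the independent product of its own marginals.  The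
distinguisher classes are assumed closed under coordinate projections and
independent resampling of a coordinate. -/
theorem computational_independence_iff_tensor {X Y : ℕ → Type}
    (𝔄 : Set (∀ n, X n × Y n → PMF Bool))
    (𝔄X : Set (∀ n, X n → PMF Bool)) (𝔄Y : Set (∀ n, Y n → PMF Bool))
    (c1 : ∀ A ∈ 𝔄X, (fun n (p : X n × Y n) => A n p.1) ∈ 𝔄)
    (c2 : ∀ A ∈ 𝔄Y, (fun n (p : X n × Y n) => A n p.2) ∈ 𝔄)
    (c3 : ∀ A ∈ 𝔄, ∀ T : (∀ n, PMF (Y n)),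
      (fun n (x : X n) => (T n).bind fun y => A n (x, y)) ∈ 𝔄X)
    (c4 : ∀ A ∈ 𝔄, ∀ S : (∀ n, PMF (X n)),
      (fun n (y : Y n) => (S n).bind fun x => A n (x, y)) ∈ 𝔄Y)
    (J : ∀ n, PMF (X n × Y n)) :
    (∃ J' : ∀ n, PMF (X n × Y n),
        (∀ n, J' n = prodMarg J' n) ∧ Indist 𝔄 J J')
      ↔ Indist 𝔄 J (prodMarg J) := by
  refine ⟨fun ⟨J', hJ', hJJ'⟩ => ?_,
    fun h => ⟨prodMarg J, fun n => congrFun (prodMarg_prodMarg J).symm n, h⟩⟩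
  have hJ'_prod : J' = prodMarg J' := funext hJ'
  have hresample_fst := (hJJ'.map_fst c1).symm.prod_left c3 (fun n => (J' n).map Prod.snd)
  have hresample_snd := (hJJ'.map_snd c2).symm.prod_right c4 (fun n => (J n).map Prod.fst)
  rw [hJ'_prod] at hJJ'
  exact hJJ'.trans (hresample_fst.trans hresample_snd)
end
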